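/- Let A, B > 0 be commuting positive definite matrices with pI ≥ AB⁻¹ ≥ qI for some p, q > 0. Then for every vector h, ‖Ah‖·‖Bh‖ ≤ ((p+q)/(2√(pq)))·⟨Ah, Bh⟩. -/

import Mathlib

/-!
Put `T = AB⁻¹`, so that `Ah = T(Bh)` and `q ≤ T ≤ p` in the Loewner order. The operators
`p - T` and `T - q` are nonnegative and commute, hence so is their product; evaluating
`⟪(p - T)(T - q)v, v⟫ ≥ 0` at `v = Bh` gives `‖Ah‖² + pq‖Bh‖² ≤ (p + q) Re⟪Ah, Bh⟫`, and the
AM-GM inequality `2√(pq)‖Ah‖‖Bh‖ ≤ ‖Ah‖² + pq‖Bh‖²` finishes the proof.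
-/

open Matrix ComplexOrder
open scoped InnerProductSpace

theorem mul_le_div_mul_of_sq_add_mul_sq_le {a b c p q : ℝ} (hpq : 0 < p * q)
    (h : a ^ 2 + p * q * b ^ 2 ≤ (p + q) * c) : a * b ≤ (p + q) / (2 * √(p * q)) * c := by
  have hs : 0 < √(p * q) := Real.sqrt_pos.2 hpq
  have hs2 : √(p * q) ^ 2 = p * q := Real.sq_sqrt hpq.le
  rw [div_mul_eq_mul_div, le_div_iff₀ (by positivity)]
  nlinarith [sq_nonneg (a - √(p * q) * b)]

namespace ContinuousLinearMap

variable {E : Type*} [NormedAddCommGroup E] [InnerProductSpace ℂ E] [CompleteSpace E]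
  {T : E →L[ℂ] E} {p q : ℝ}

theorem nonneg_sub_mul_sub_of_le_of_le (hq : algebraMap ℝ (E →L[ℂ] E) q ≤ T)
    (hp : T ≤ algebraMap ℝ (E →L[ℂ] E) p) :
    0 ≤ (algebraMap ℝ (E →L[ℂ] E) p - T) * (T - algebraMap ℝ (E →L[ℂ] E) q) :=
  Commute.mul_nonneg (sub_nonneg.2 hp) (sub_nonneg.2 hq) <|
    ((Algebra.commute_algebraMap_left p T).sub_left (Commute.refl T)).sub_right
      (Algebra.commute_algebraMap_right q _)

theorem norm_sq_add_mul_norm_sq_le_re_inner (hq : algebraMap ℝ (E →L[ℂ] E) q ≤ T)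
    (hp : T ≤ algebraMap ℝ (E →L[ℂ] E) p) (v : E) :
    ‖T v‖ ^ 2 + p * q * ‖v‖ ^ 2 ≤ (p + q) * (⟪T v, v⟫_ℂ).re := by
  have hT : IsSelfAdjoint T := by
    simpa only [sub_add_cancel] using (IsSelfAdjoint.of_nonneg (sub_nonneg.2 hq)).add
      ((IsSelfAdjoint.all q).algebraMap (E →L[ℂ] E))
  have hTT : (⟪T (T v), v⟫_ℂ).re = ‖T v‖ ^ 2 := by
    rw [← adjoint_inner_right, hT.adjoint_eq]
    exact inner_self_eq_norm_sq (𝕜 := ℂ) _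
  have hvv : (⟪v, v⟫_ℂ).re = ‖v‖ ^ 2 := inner_self_eq_norm_sq (𝕜 := ℂ) v
  have hSv : ((algebraMap ℝ (E →L[ℂ] E) p - T) * (T - algebraMap ℝ (E →L[ℂ] E) q)) v =
      (p + q) • T v - T (T v) - (p * q) • v := by
    simp only [Algebra.algebraMap_eq_smul_one, mul_apply_eq_comp, _root_.sub_apply,
      _root_.smul_apply, one_apply_eq_self, map_sub, map_smul_of_tower]
    module
  have hS := ((nonneg_iff_isPositive _).1
    (nonneg_sub_mul_sub_of_le_of_le hq hp)).re_inner_nonneg_left v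
  rw [hSv, inner_sub_left, inner_sub_left, inner_smul_left_eq_smul, inner_smul_left_eq_smul,
    RCLike.re_to_complex, Complex.sub_re, Complex.sub_re, Complex.smul_re, Complex.smul_re, hTT,
    hvv, smul_eq_mul, smul_eq_mul] at hS
  linarith

theorem norm_apply_mul_norm_le_re_inner (hq : algebraMap ℝ (E →L[ℂ] E) q ≤ T)
    (hp : T ≤ algebraMap ℝ (E →L[ℂ] E) p) (hpq : 0 < p * q) (v : E) :
    ‖T v‖ * ‖v‖ ≤ (p + q) / (2 * √(p * q)) * (⟪T v, v⟫_ℂ).re :=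
  mul_le_div_mul_of_sq_add_mul_sq_le hpq (norm_sq_add_mul_norm_sq_le_re_inner hq hp v)

end ContinuousLinearMap

namespace Matrix

variable {n : Type*} [Fintype n] [DecidableEq n]

theorem isPositive_toEuclideanCLM_iff {M : Matrix n n ℂ} :
    (toEuclideanCLM (n := n) (𝕜 := ℂ) M).IsPositive ↔ M.PosSemidef := by
  rw [← ContinuousLinearMap.isPositive_toLinearMap_iff, coe_toEuclideanCLM_eq_toEuclideanLin,
    isPositive_toEuclideanLin_iff]

theorem toEuclideanCLM_ofReal_smul_one (r : ℝ) :
    toEuclideanCLM (n := n) (𝕜 := ℂ) ((r : ℂ) • 1) = algebraMap ℝ _ r := by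
  rw [map_smul, map_one, Algebra.algebraMap_eq_smul_one]
  exact Complex.coe_smul r (1 : EuclideanSpace ℂ n →L[ℂ] EuclideanSpace ℂ n)

theorem algebraMap_le_toEuclideanCLM_iff {M : Matrix n n ℂ} (q : ℝ) :
    algebraMap ℝ _ q ≤ toEuclideanCLM (n := n) (𝕜 := ℂ) M ↔ (M - (q : ℂ) • 1).PosSemidef := by
  rw [ContinuousLinearMap.le_def, ← isPositive_toEuclideanCLM_iff, map_sub,
    toEuclideanCLM_ofReal_smul_one]

theorem toEuclideanCLM_le_algebraMap_iff {M : Matrix n n ℂ} (p : ℝ) :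
    toEuclideanCLM (n := n) (𝕜 := ℂ) M ≤ algebraMap ℝ _ p ↔ ((p : ℂ) • 1 - M).PosSemidef := by
  rw [ContinuousLinearMap.le_def, ← isPositive_toEuclideanCLM_iff, map_sub,
    toEuclideanCLM_ofReal_smul_one]

end Matrix

theorem cassel_operator {n : ℕ} (A B : Matrix (Fin n) (Fin n) ℂ)
    (hB : B.PosDef) (p q : ℝ)
    (hp : 0 < p) (hq : 0 < q)
    (hup : (((p : ℂ) • (1 : Matrix (Fin n) (Fin n) ℂ)) - A * B⁻¹).PosSemidef)
    (hlo : (A * B⁻¹ - ((q : ℂ) • (1 : Matrix (Fin n) (Fin n) ℂ))).PosSemidef)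
    (h : EuclideanSpace ℂ (Fin n)) :
    ‖Matrix.toEuclideanLin A h‖ * ‖Matrix.toEuclideanLin B h‖ ≤
      (p + q) / (2 * Real.sqrt (p * q)) *
        (inner ℂ (Matrix.toEuclideanLin A h) (Matrix.toEuclideanLin B h) : ℂ).re := by
  set T := toEuclideanCLM (n := Fin n) (𝕜 := ℂ) (A * B⁻¹)
  have hTB : T (toEuclideanLin B h) = toEuclideanLin A h := by
    conv_rhs => rw [← nonsing_inv_mul_cancel_right B A ((isUnit_iff_isUnit_det B).1 hB.isUnit),
      ← coe_toEuclideanCLM_eq_toEuclideanLin, map_mul]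
    rfl
  rw [← hTB]
  exact T.norm_apply_mul_norm_le_re_inner ((algebraMap_le_toEuclideanCLM_iff q).2 hlo)
    ((toEuclideanCLM_le_algebraMap_iff p).2 hup) (mul_pos hp hq) _
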